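/- arXiv:2007.11306 — 4 statements merged into one kernel-verified Lean document; each statement's English description precedes it below -/
import Mathlib

section
/- Let C be a p×p real symmetric positive definite matrix and Λ a p×p real matrix such that I + λΛ is invertible for all λ ≥ 0. For λ ≥ 0 define M(λ) = (I + λΛ)⁻¹ C ((I + λΛ)ᵀ)⁻¹. Then the map λ ↦ M(λ) is monotone nonincreasing on [0, ∞) in the Loewner order (i.e., M(λ₁) − M(λ₂) is positive semidefinite whenever 0 ≤ λ₁ ≤ λ₂) if and only if the symmetric matrix ΛᵀC⁻¹ + C⁻¹Λ is positive semidefinite. -/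
/-!
Put `N(λ) = (I + λΛ)ᵀ C⁻¹ (I + λΛ)`, so that `M(λ) = N(λ)⁻¹`. Inversion reverses the Loewner
order on positive definite matrices, hence `M` is nonincreasing iff `N` is nondecreasing. With
`S = ΛᵀC⁻¹ + C⁻¹Λ` and `Q = ΛᵀC⁻¹Λ ⪰ 0` we have `N(λ₂) - N(λ₁) = (λ₂ - λ₁) S + (λ₂² - λ₁²) Q`,
which is positive semidefinite when `S` is; conversely `N(ε) - N(0) = ε (S + ε Q) ⪰ 0` for all
`ε > 0` forces `S ⪰ 0` as `ε → 0`.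
-/

open Matrix Filter Topology

namespace Matrix

variable {n : Type*} [Fintype n]

theorem IsHermitian.posSemidef_of_forall_pos_add_smul {S Q : Matrix n n ℝ} (hS : S.IsHermitian)
    (h : ∀ ε : ℝ, 0 < ε → (S + ε • Q).PosSemidef) : S.PosSemidef := by
  refine PosSemidef.of_dotProduct_mulVec_nonneg hS fun x => ?_
  have hlim : Tendsto (fun ε : ℝ => star x ⬝ᵥ (S *ᵥ x) + ε * (star x ⬝ᵥ (Q *ᵥ x)))
      (𝓝[>] 0) (𝓝 (star x ⬝ᵥ (S *ᵥ x))) := by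
    have : Continuous (fun ε : ℝ => star x ⬝ᵥ (S *ᵥ x) + ε * (star x ⬝ᵥ (Q *ᵥ x))) := by
      fun_prop
    simpa using this.continuousWithinAt (s := Set.Ioi 0) (x := 0) |>.tendsto
  refine ge_of_tendsto hlim (eventually_nhdsWithin_of_forall fun ε (hε : 0 < ε) => ?_)
  simpa [add_mulVec, smul_mulVec, dotProduct_add, dotProduct_smul] using
    (h ε hε).dotProduct_mulVec_nonneg x

variable [DecidableEq n]

/-- The quadratic forms satisfy `yᵀ(Y⁻¹ - X⁻¹)y = (x - u)ᵀY(x - u) + xᵀ(X - Y)x`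
with `x = X⁻¹y`, `u = Y⁻¹y`. -/
theorem PosSemidef.inv_sub_inv {X Y : Matrix n n ℝ} (hX : X.PosDef) (hY : Y.PosDef)
    (h : (X - Y).PosSemidef) : (Y⁻¹ - X⁻¹).PosSemidef := by
  refine PosSemidef.of_dotProduct_mulVec_nonneg (hY.1.inv.sub hX.1.inv) fun y => ?_
  set x := X⁻¹ *ᵥ y
  set u := Y⁻¹ *ᵥ y
  have hXx : X *ᵥ x = y := by simp [x, mulVec_mulVec, mul_nonsing_inv _ hX.det_pos.ne'.isUnit]
  have hYu : Y *ᵥ u = y := by simp [u, mulVec_mulVec, mul_nonsing_inv _ hY.det_pos.ne'.isUnit]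
  have hYsymm : u ⬝ᵥ (Y *ᵥ x) = y ⬝ᵥ x := by
    have hYt : Yᵀ = Y := hY.1
    rw [dotProduct_mulVec, ← hYt, vecMul_transpose, hYu]
  have key : star y ⬝ᵥ ((Y⁻¹ - X⁻¹) *ᵥ y)
      = star (x - u) ⬝ᵥ (Y *ᵥ (x - u)) + star x ⬝ᵥ ((X - Y) *ᵥ x) := by
    simp only [star_trivial, sub_mulVec, mulVec_sub, dotProduct_sub, sub_dotProduct, hXx, hYu]
    rw [hYsymm, dotProduct_comm u y, dotProduct_comm x y]
    ring
  rw [key]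
  exact add_nonneg (hY.posSemidef.dotProduct_mulVec_nonneg _) (h.dotProduct_mulVec_nonneg x)

theorem PosDef.posSemidef_sub_iff_posSemidef_inv_sub_inv {X Y : Matrix n n ℝ} (hX : X.PosDef)
    (hY : Y.PosDef) : (X - Y).PosSemidef ↔ (Y⁻¹ - X⁻¹).PosSemidef := by
  refine ⟨PosSemidef.inv_sub_inv hX hY, fun h => ?_⟩
  simpa only [nonsing_inv_nonsing_inv _ hX.det_pos.ne'.isUnit,
    nonsing_inv_nonsing_inv _ hY.det_pos.ne'.isUnit] using PosSemidef.inv_sub_inv hY.inv hX.inv h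

end Matrix

section Ridge

variable {n : Type*} [Fintype n] [DecidableEq n]

noncomputable def ridgePrecision (C A : Matrix n n ℝ) (l : ℝ) : Matrix n n ℝ :=
  (1 + l • A)ᵀ * C⁻¹ * (1 + l • A)

theorem ridgePrecision_sub (C A : Matrix n n ℝ) (l₁ l₂ : ℝ) :
    ridgePrecision C A l₂ - ridgePrecision C A l₁ =
      (l₂ - l₁) • (Aᵀ * C⁻¹ + C⁻¹ * A) + (l₂ ^ 2 - l₁ ^ 2) • (Aᵀ * C⁻¹ * A) := by
  simp only [ridgePrecision, transpose_add, transpose_smul, transpose_one, add_mul, mul_add,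
    smul_mul_assoc, Matrix.mul_smul, one_mul, mul_one, smul_add, smul_smul]
  module

theorem inv_ridgePrecision {C : Matrix n n ℝ} (hC : IsUnit C.det) (A : Matrix n n ℝ) (l : ℝ) :
    (ridgePrecision C A l)⁻¹ = (1 + l • A)⁻¹ * C * ((1 + l • A)ᵀ)⁻¹ := by
  rw [ridgePrecision, Matrix.mul_inv_rev, Matrix.mul_inv_rev, nonsing_inv_nonsing_inv C hC,
    Matrix.mul_assoc]

theorem ridgePrecision_posDef {C : Matrix n n ℝ} (hC : C.PosDef) (A : Matrix n n ℝ) {l : ℝ}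
    (hl : IsUnit (1 + l • A).det) : (ridgePrecision C A l).PosDef := by
  have := (Matrix.IsUnit.posDef_star_left_conjugate_iff ((isUnit_iff_isUnit_det _).mpr hl)).mpr
    hC.inv
  rwa [star_eq_conjTranspose, conjTranspose_eq_transpose_of_trivial] at this

theorem ridgePrecision_monotone_iff {C : Matrix n n ℝ} (hC : C.PosSemidef) (A : Matrix n n ℝ) :
    (∀ l₁ l₂ : ℝ, 0 ≤ l₁ → l₁ ≤ l₂ → (ridgePrecision C A l₂ - ridgePrecision C A l₁).PosSemidef) ↔
      (Aᵀ * C⁻¹ + C⁻¹ * A).PosSemidef := by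
  have hQ : (Aᵀ * C⁻¹ * A).PosSemidef := by
    simpa [conjTranspose_eq_transpose_of_trivial] using hC.inv.conjTranspose_mul_mul_same A
  constructor
  · intro h
    have hS : (Aᵀ * C⁻¹ + C⁻¹ * A).IsHermitian := by
      have := isHermitian_transpose_add_self (C⁻¹ * A)
      rwa [conjTranspose_mul, hC.inv.1, conjTranspose_eq_transpose_of_trivial] at this
    refine hS.posSemidef_of_forall_pos_add_smul (Q := Aᵀ * C⁻¹ * A) fun ε hε => ?_
    have := (h 0 ε le_rfl hε.le).smul (inv_nonneg.mpr hε.le)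
    -- `N ε - N 0 = ε • (S + ε • Q)`
    convert this using 1
    rw [ridgePrecision_sub]
    match_scalars <;> field_simp <;> ring
  · intro hS l₁ l₂ h₁ h₁₂
    rw [ridgePrecision_sub]
    exact (hS.smul (sub_nonneg.mpr h₁₂)).add (hQ.smul (by nlinarith))

end Ridge

/-- For symmetric positive definite `C` and a matrix `A` (called `Λ` in the
paper) with `I + λA` invertible for all `λ ≥ 0`, the map
`λ ↦ M(λ) = (I + λA)⁻¹ C ((I + λA)ᵀ)⁻¹` is monotone nonincreasing on `[0, ∞)` in the
Loewner order if and only if `AᵀC⁻¹ + C⁻¹A` is positive semidefinite. -/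
theorem ridge_covariance_monotone_iff {p : ℕ}
    (C A : Matrix (Fin p) (Fin p) ℝ) (hC : C.PosDef)
    (hinv : ∀ l : ℝ, 0 ≤ l → IsUnit (1 + l • A).det)
    (M : ℝ → Matrix (Fin p) (Fin p) ℝ)
    (hM : ∀ l : ℝ, M l = (1 + l • A)⁻¹ * C * ((1 + l • A)ᵀ)⁻¹) :
    (∀ l₁ l₂ : ℝ, 0 ≤ l₁ → l₁ ≤ l₂ → (M l₁ - M l₂).PosSemidef) ↔
      (Aᵀ * C⁻¹ + C⁻¹ * A).PosSemidef := by
  have hN : ∀ l : ℝ, 0 ≤ l → (ridgePrecision C A l).PosDef := fun l hl =>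
    ridgePrecision_posDef hC A (hinv l hl)
  have hMN : ∀ l : ℝ, M l = (ridgePrecision C A l)⁻¹ := fun l => by
    rw [hM, inv_ridgePrecision hC.det_pos.ne'.isUnit]
  rw [← ridgePrecision_monotone_iff hC.posSemidef A]
  refine forall₄_congr fun l₁ l₂ h₁ h₁₂ => ?_
  rw [hMN, hMN, (hN l₂ (h₁.trans h₁₂)).posSemidef_sub_iff_posSemidef_inv_sub_inv (hN l₁ h₁)]
end

section
/- Let g : ℝ^p → ℝ be strictly concave and differentiable, and let h : ℝ^p → ℝ be differentiable. Let β̂, β̂' ∈ ℝ^p and suppose there exists β* ∈ ℝ^p that is simultaneously a maximizer of the function β ↦ g(β − β̂) + h(β) and a maximizer of the function β ↦ g(β − β̂') + h(β) over ℝ^p. Then β̂ = β̂'. -/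
/-!
At a maximiser `β*` of `β ↦ g (β - b) + h β`, concavity of `g` linearises the first-order
condition into a global inequality: `-h'(β*)` is a supergradient of `g` at `β* - b`. So `g` has the
same supergradient at `β* - β̂` and at `β* - β̂'`; a strictly concave function cannot, since it would
then be affine on the segment joining the two points.
-/

open Set Filter Topology

section Supergradient

variable {E : Type*} [AddCommGroup E] [Module ℝ E] [TopologicalSpace E]

def IsSupergradient (g : E → ℝ) (x : E) (L : E →L[ℝ] ℝ) : Prop :=
  ∀ z, g z ≤ g x + L (z - x)

theorem StrictConcaveOn.eq_of_isSupergradient {g : E → ℝ} (hg : StrictConcaveOn ℝ univ g)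
    {x y : E} {L : E →L[ℝ] ℝ} (hx : IsSupergradient g x L) (hy : IsSupergradient g y L) :
    x = y := by
  by_contra hxy
  have hmid := hg.2 (mem_univ x) (mem_univ y) hxy (by norm_num : (0 : ℝ) < 1 / 2)
    (by norm_num : (0 : ℝ) < 1 / 2) (by norm_num)
  have hmid_sub : (1 / 2 : ℝ) • x + (1 / 2 : ℝ) • y - x = (1 / 2 : ℝ) • (y - x) := by module
  have h_at_mid := hx ((1 / 2 : ℝ) • x + (1 / 2 : ℝ) • y)
  have h_xy := hx y
  have h_yx := hy x
  rw [hmid_sub, map_smul, smul_eq_mul] at h_at_mid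
  rw [← neg_sub, map_neg] at h_yx
  simp only [smul_eq_mul] at hmid
  linarith

end Supergradient

variable {E : Type*} [NormedAddCommGroup E] [NormedSpace ℝ E]

theorem ConcaveOn.isSupergradient_neg_of_isLocalMax_add {g f : E → ℝ} {x : E} {L : E →L[ℝ] ℝ}
    (hg : ConcaveOn ℝ univ g) (hf : HasFDerivAt f L x)
    (hmax : IsLocalMax (fun w => g w + f w) x) : IsSupergradient g x (-L) := by
  intro z
  set v := z - x
  set ψ : ℝ → ℝ := fun t => f (x + t • v) + t * (g z - g x)
  have hline : HasDerivAt (fun t : ℝ => x + t • v) v 0 := by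
    simpa using ((hasDerivAt_id (0 : ℝ)).smul_const v).const_add x
  have hψ : HasDerivAt ψ (L v + (g z - g x)) 0 :=
    (hf.comp_hasDerivAt_of_eq 0 hline (by simp)).add
      (hasDerivAt_mul_const (g z - g x))
  -- Along the segment `[x, z]`, concavity bounds `g` below by its chord.
  have hψ_max : IsLocalMaxOn ψ (Icc 0 1) 0 := by
    have hlim : Tendsto (fun t : ℝ => x + t • v) (𝓝 0) (𝓝 x) := by
      simpa using hline.continuousAt.tendsto
    have hnear : ∀ᶠ t in 𝓝 (0 : ℝ), g (x + t • v) + f (x + t • v) ≤ g x + f x :=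
      hlim.eventually hmax
    filter_upwards [nhdsWithin_le_nhds hnear, self_mem_nhdsWithin] with t ht ⟨ht0, ht1⟩
    have hchord := hg.2 (mem_univ x) (mem_univ z) (sub_nonneg.2 ht1) ht0 (by ring)
    have hpt : (1 - t) • x + t • z = x + t • v := by simp only [v]; module
    simp only [hpt, smul_eq_mul] at hchord
    simp only [ψ, zero_smul, add_zero, zero_mul]
    linarith
  have hdir : (1 : ℝ) ∈ posTangentConeAt (Icc 0 1) 0 :=
    mem_posTangentConeAt_of_segment_subset (by simp [segment_eq_Icc])
  have hslope := hψ_max.hasFDerivWithinAt_nonpos hψ.hasFDerivAt.hasFDerivWithinAt hdir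
  rw [ContinuousLinearMap.toSpanSingleton_apply, one_smul] at hslope
  rw [neg_apply]
  linarith

theorem twoREG_injective_general {p : ℕ}
    (g h : EuclideanSpace ℝ (Fin p) → ℝ)
    (hg_concave : StrictConcaveOn ℝ Set.univ g)
    (hh_diff : Differentiable ℝ h)
    (βhat βhat' : EuclideanSpace ℝ (Fin p))
    (hmax : ∃ βstar : EuclideanSpace ℝ (Fin p),
        IsMaxOn (fun β => g (β - βhat) + h β) Set.univ βstar ∧
        IsMaxOn (fun β => g (β - βhat') + h β) Set.univ βstar) :
    βhat = βhat' := by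
  obtain ⟨βstar, hmax₁, hmax₂⟩ := hmax
  have supergradient : ∀ b, IsMaxOn (fun β => g (β - b) + h β) univ βstar →
      IsSupergradient g (βstar - b) (-fderiv ℝ h βstar) := fun b hb =>
    hg_concave.concaveOn.isSupergradient_neg_of_isLocalMax_add (f := fun w => h (w + b))
      ((hasFDerivAt_comp_add_right b).2 (by simpa using (hh_diff βstar).hasFDerivAt))
      (IsMaxOn.isLocalMax (fun w _ => by simpa using hb (mem_univ (w + b))) univ_mem)
  exact sub_right_injective <| hg_concave.eq_of_isSupergradient
    (supergradient βhat hmax₁) (supergradient βhat' hmax₂)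

/-- If `g : ℝ^p → ℝ` is strictly concave and differentiable and
`h : ℝ^p → ℝ` is differentiable, and some `β*` simultaneously maximizes
`β ↦ g(β − β̂) + h(β)` and `β ↦ g(β − β̂') + h(β)` over `ℝ^p`, then `β̂ = β̂'`. -/
theorem twoREG_injective {p : ℕ}
    (g h : EuclideanSpace ℝ (Fin p) → ℝ)
    (hg_concave : StrictConcaveOn ℝ Set.univ g)
    (hg_diff : Differentiable ℝ g) (hh_diff : Differentiable ℝ h)
    (βhat βhat' : EuclideanSpace ℝ (Fin p))
    (hmax : ∃ βstar : EuclideanSpace ℝ (Fin p),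
        IsMaxOn (fun β => g (β - βhat) + h β) Set.univ βstar ∧
        IsMaxOn (fun β => g (β - βhat') + h β) Set.univ βstar) :
    βhat = βhat' :=
  twoREG_injective_general g h hg_concave hh_diff βhat βhat' hmax
end

section
/- Let (Ω, F, P) be a probability space and p ≥ 1. Let q : ℝ^p → ℝ be strictly positive everywhere, continuous, and bounded. Let β* ∈ ℝ^p, let β̂_n : Ω → ℝ^p be measurable with β̂_n → β* in probability (i.e., P(‖β̂_n − β*‖ > δ) → 0 for all δ > 0), and let C_n be p×p symmetric positive definite matrices with operator norm ‖C_n‖ → 0 as n → ∞. Let γ̂_n : Ω → ℝ^p be measurable maps such that, almost surely, γ̂_n maximizes the function β ↦ exp(−(β̂_n − β)ᵀC_n⁻¹(β̂_n − β)/2)·q(β) over β ∈ ℝ^p. Then γ̂_n → β* in probability. -/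
/-!
If `β̂ₙ` lies within `ε/2` of `β*`, then `q β̂ₙ ≥ c`, the minimum of `q` on that closed ball.
Comparing the objective at its maximizer `γ̂ₙ` with its value at `β̂ₙ` gives
`c ≤ exp (-Qₙ/2) * sup q`, where `Qₙ = (β̂ₙ - γ̂ₙ)ᵀ Cₙ⁻¹ (β̂ₙ - γ̂ₙ)`. Since
`‖v‖² ≤ ‖Cₙ‖ vᵀ Cₙ⁻¹ v`, this forces `‖β̂ₙ - γ̂ₙ‖² ≤ 2 ‖Cₙ‖ log (sup q / c) → 0`, so eventually
`γ̂ₙ` is within `ε` of `β*` whenever `β̂ₙ` is within `ε/2` of it.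
-/

open MeasureTheory Filter Matrix

open scoped MatrixOrder

lemma EuclideanSpace.norm_toLp_sq {n : Type*} [Fintype n] (x : n → ℝ) :
    ‖WithLp.toLp 2 x‖ ^ 2 = x ⬝ᵥ x := by
  rw [← real_inner_self_eq_norm_sq, EuclideanSpace.inner_toLp_toLp, star_trivial]

theorem Matrix.PosDef.norm_sq_le_opNorm_mul_dotProduct_inv_mulVec {n : Type*} [Fintype n]
    [DecidableEq n] {C : Matrix n n ℝ} (hC : C.PosDef) (v : n → ℝ) :
    ‖WithLp.toLp 2 v‖ ^ 2 ≤ ‖toEuclideanCLM (𝕜 := ℝ) C‖ * (v ⬝ᵥ C⁻¹ *ᵥ v) := by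
  have hdet : IsUnit C.det := isUnit_iff_ne_zero.mpr hC.det_pos.ne'
  set u := C⁻¹ *ᵥ v
  have hv : C *ᵥ u = v := by rw [mulVec_mulVec, mul_nonsing_inv _ hdet, one_mulVec]
  set S := CFC.sqrt C
  have hS2 : S * S = C := CFC.sqrt_mul_sqrt_self C hC.posSemidef.nonneg
  have hS_star : star S = S := IsSelfAdjoint.of_nonneg (CFC.sqrt_nonneg C)
  set T := toEuclideanCLM (𝕜 := ℝ) S
  -- `C = S²` with `S` self-adjoint, so `‖C‖ = ‖S‖²` and `v ⬝ C⁻¹ v = ‖S C⁻¹ v‖²`.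
  have hT : ‖T‖ ^ 2 = ‖toEuclideanCLM (𝕜 := ℝ) C‖ := by
    rw [sq, ← CStarRing.norm_star_mul_self, ← map_star, hS_star, ← map_mul, hS2]
  have hSu : ‖WithLp.toLp 2 (S *ᵥ u)‖ ^ 2 = v ⬝ᵥ u := by
    have hSt : Sᵀ = S := by simpa [star_eq_conjTranspose] using hS_star
    rw [EuclideanSpace.norm_toLp_sq, ← hv, ← hS2, dotProduct_comm, ← mulVec_mulVec,
      dotProduct_mulVec, ← mulVec_transpose, hSt]
  have hTv : T (WithLp.toLp 2 (S *ᵥ u)) = WithLp.toLp 2 v := by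
    rw [toEuclideanCLM_toLp, mulVec_mulVec, hS2, hv]
  calc ‖WithLp.toLp 2 v‖ ^ 2 ≤ (‖T‖ * ‖WithLp.toLp 2 (S *ᵥ u)‖) ^ 2 := by
        rw [← hTv]; gcongr; exact T.le_opNorm _
    _ = ‖toEuclideanCLM (𝕜 := ℝ) C‖ * (v ⬝ᵥ u) := by rw [mul_pow, hT, hSu]

theorem MeasureTheory.tendstoInMeasure_const_of_forall_ae_dist_lt {Ω ι E : Type*}
    [MeasurableSpace Ω] {μ : Measure Ω} [PseudoMetricSpace E] {l : Filter ι}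
    {f g : ι → Ω → E} {x y : E} (hf : TendstoInMeasure μ f l fun _ => x)
    (hfg : ∀ ε > 0, ∃ δ > 0, ∀ᶠ i in l, ∀ᵐ ω ∂μ, dist (f i ω) x < δ → dist (g i ω) y < ε) :
    TendstoInMeasure μ g l fun _ => y := by
  rw [tendstoInMeasure_iff_dist] at hf ⊢
  intro ε hε
  obtain ⟨δ, hδ, hδε⟩ := hfg ε hε
  refine tendsto_of_tendsto_of_tendsto_of_le_of_le' tendsto_const_nhds (hf δ hδ)
    (Eventually.of_forall fun _ => zero_le) ?_
  filter_upwards [hδε] with i hi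
  refine measure_mono_ae ?_
  filter_upwards [hi] with ω hω hgω
  exact not_lt.mp fun hfω => (hω hfω).not_ge hgω

theorem Matrix.PosDef.sq_dist_le_of_isMaxOn_exp_neg_mul {n : Type*} [Fintype n] [DecidableEq n]
    {C : Matrix n n ℝ} (hC : C.PosDef) {q : EuclideanSpace ℝ n → ℝ} {M c : ℝ}
    (hqM : ∀ x, q x ≤ M) (hc : 0 < c) {b g : EuclideanSpace ℝ n} (hb : c ≤ q b)
    (hmax : IsMaxOn (fun β : EuclideanSpace ℝ n =>
        Real.exp (-((fun i => b i - β i) ⬝ᵥ C⁻¹.mulVec (fun i => b i - β i)) / 2) * q β)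
      Set.univ g) :
    dist b g ^ 2 ≤ ‖toEuclideanCLM (𝕜 := ℝ) C‖ * (2 * Real.log (M / c)) := by
  set d : n → ℝ := fun i => b i - g i
  set Q := d ⬝ᵥ C⁻¹ *ᵥ d
  have hbg : q b ≤ Real.exp (-Q / 2) * q g := by
    simpa only [sub_self, ← Pi.zero_def, zero_dotProduct, neg_zero, zero_div, Real.exp_zero,
      one_mul] using isMaxOn_univ_iff.1 hmax b
  have hcM : c * Real.exp (Q / 2) ≤ M :=
    calc c * Real.exp (Q / 2) ≤ Real.exp (-Q / 2) * q g * Real.exp (Q / 2) := by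
          gcongr; exact hb.trans hbg
      _ = q g := by
          rw [mul_right_comm, ← Real.exp_add, neg_div, neg_add_cancel, Real.exp_zero, one_mul]
      _ ≤ M := hqM g
  have hM : 0 < M / c := div_pos (hc.trans_le (hb.trans (hqM b))) hc
  have hQ : Q ≤ 2 * Real.log (M / c) := by
    linarith [(Real.le_log_iff_exp_le hM).2 ((le_div_iff₀' hc).2 hcM)]
  calc dist b g ^ 2 = ‖WithLp.toLp 2 d‖ ^ 2 := by rw [dist_eq_norm]; rfl
    _ ≤ ‖toEuclideanCLM (𝕜 := ℝ) C‖ * (d ⬝ᵥ C⁻¹ *ᵥ d) :=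
      hC.norm_sq_le_opNorm_mul_dotProduct_inv_mulVec d
    _ ≤ ‖toEuclideanCLM (𝕜 := ℝ) C‖ * (2 * Real.log (M / c)) := by gcongr

theorem normal_2REG_consistent_general
    {Ω : Type*} [MeasurableSpace Ω] (μ : Measure Ω)
    {p : ℕ}
    (q : EuclideanSpace ℝ (Fin p) → ℝ)
    (hq_pos : ∀ x, 0 < q x) (hq_cont : Continuous q) (hq_bdd : ∃ M, ∀ x, q x ≤ M)
    (βstar : EuclideanSpace ℝ (Fin p))
    (βhat : ℕ → Ω → EuclideanSpace ℝ (Fin p))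
    (hβ_conv : TendstoInMeasure μ βhat atTop (fun _ => βstar))
    (C : ℕ → Matrix (Fin p) (Fin p) ℝ)
    (hC_pd : ∀ n, (C n).PosDef)
    (hC_norm : Tendsto (fun n => ‖Matrix.toEuclideanCLM (𝕜 := ℝ) (C n)‖) atTop (nhds 0))
    (γ : ℕ → Ω → EuclideanSpace ℝ (Fin p))
    (hγ_max : ∀ n, ∀ᵐ ω ∂μ,
        IsMaxOn (fun β : EuclideanSpace ℝ (Fin p) =>
            Real.exp (-((fun i => βhat n ω i - β i) ⬝ᵥ
                (C n)⁻¹.mulVec (fun i => βhat n ω i - β i)) / 2) * q β)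
          Set.univ (γ n ω)) :
    TendstoInMeasure μ γ atTop (fun _ => βstar) := by
  obtain ⟨M, hM⟩ := hq_bdd
  refine tendstoInMeasure_const_of_forall_ae_dist_lt hβ_conv fun ε hε => ⟨ε / 2, half_pos hε, ?_⟩
  obtain ⟨x₀, -, hmin⟩ := (isCompact_closedBall βstar (ε / 2)).exists_isMinOn
    ⟨βstar, Metric.mem_closedBall_self (half_pos hε).le⟩ hq_cont.continuousOn
  have hsmall : ∀ᶠ n in atTop,
      ‖toEuclideanCLM (𝕜 := ℝ) (C n)‖ * (2 * Real.log (M / q x₀)) < (ε / 2) ^ 2 := by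
    refine (hC_norm.mul_const _).eventually_lt_const ?_
    rw [zero_mul]; positivity
  filter_upwards [hsmall] with n hn
  filter_upwards [hγ_max n] with ω hmax hβω
  have hclose : dist (βhat n ω) (γ n ω) < ε / 2 := lt_of_pow_lt_pow_left₀ 2 (half_pos hε).le <|
    ((hC_pd n).sq_dist_le_of_isMaxOn_exp_neg_mul hM (hq_pos x₀)
      (hmin (Metric.mem_closedBall.2 hβω.le)) hmax).trans_lt hn
  calc dist (γ n ω) βstar ≤ dist (βhat n ω) (γ n ω) + dist (βhat n ω) βstar :=
        dist_triangle_left _ _ _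
    _ < ε := by linarith

/-- Consistency of the normal 2REG estimator: if the prior density `q` is
strictly positive, continuous and bounded, `β̂_n → β*` in probability, and the covariance
matrices `C_n` are symmetric positive definite with operator norms tending to `0`, then any
measurable a.s.-maximizers `γ̂_n` of `β ↦ exp(−(β̂_n − β)ᵀC_n⁻¹(β̂_n − β)/2)·q(β)`
converge to `β*` in probability. -/
theorem normal_2REG_consistent
    {Ω : Type*} [MeasurableSpace Ω] (μ : Measure Ω) [IsProbabilityMeasure μ]
    {p : ℕ} (hp : 1 ≤ p)
    (q : EuclideanSpace ℝ (Fin p) → ℝ)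
    (hq_pos : ∀ x, 0 < q x) (hq_cont : Continuous q) (hq_bdd : ∃ M, ∀ x, q x ≤ M)
    (βstar : EuclideanSpace ℝ (Fin p))
    (βhat : ℕ → Ω → EuclideanSpace ℝ (Fin p))
    (hβ_meas : ∀ n, Measurable (βhat n))
    (hβ_conv : TendstoInMeasure μ βhat atTop (fun _ => βstar))
    (C : ℕ → Matrix (Fin p) (Fin p) ℝ)
    (hC_pd : ∀ n, (C n).PosDef)
    (hC_norm : Tendsto (fun n => ‖Matrix.toEuclideanCLM (𝕜 := ℝ) (C n)‖) atTop (nhds 0))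
    (γ : ℕ → Ω → EuclideanSpace ℝ (Fin p))
    (hγ_meas : ∀ n, Measurable (γ n))
    (hγ_max : ∀ n, ∀ᵐ ω ∂μ,
        IsMaxOn (fun β : EuclideanSpace ℝ (Fin p) =>
            Real.exp (-((fun i => βhat n ω i - β i) ⬝ᵥ
                (C n)⁻¹.mulVec (fun i => βhat n ω i - β i)) / 2) * q β)
          Set.univ (γ n ω)) :
    TendstoInMeasure μ γ atTop (fun _ => βstar) :=
  normal_2REG_consistent_general μ q hq_pos hq_cont hq_bdd βstar βhat hβ_conv C hC_pd hC_norm γ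
    hγ_max
end

section
/- Let U be a p×p real orthogonal matrix with columns u_1, ..., u_p, let Ĉ be a p×p real symmetric matrix, and let λ ≥ 0. Define p_Π(Ĉ) = U((UᵀĈU) ∘ I)Uᵀ. Then the function Γ ↦ ‖Ĉ − Γ‖_F² + λ·Σ_{i≠j}(u_iᵀΓu_j)², over p×p real symmetric matrices Γ, has the unique minimizer Γ* = (1 − μ)Ĉ + μ·p_Π(Ĉ), where μ = λ/(1 + λ). -/
open Matrix

/-- Squared Frobenius norm `‖A‖_F² = tr(AᵀA)`. -/
noncomputable def frobSq {p : ℕ} (A : Matrix (Fin p) (Fin p) ℝ) : ℝ :=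
  Matrix.trace (Aᵀ * A)

lemma frobSq_eq_sum {p : ℕ} (A : Matrix (Fin p) (Fin p) ℝ) :
    frobSq A = ∑ i : Fin p, ∑ j : Fin p, (A i j) ^ 2 := by
  unfold frobSq Matrix.trace
  simp [Matrix.mul_apply, Matrix.diag, sq]
  rw [Finset.sum_comm]

lemma frobSq_conj {p : ℕ} (U A : Matrix (Fin p) (Fin p) ℝ) (hUUt : U * Uᵀ = 1) :
    frobSq (Uᵀ * A * U) = frobSq A := by
  have hcan : ∀ X : Matrix (Fin p) (Fin p) ℝ, U * (Uᵀ * X) = X := fun X => by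
    rw [← Matrix.mul_assoc, hUUt, Matrix.one_mul]
  unfold frobSq
  have h1 : (Uᵀ * A * U)ᵀ * (Uᵀ * A * U) = Uᵀ * (Aᵀ * (A * U)) := by
    simp only [transpose_mul, transpose_transpose, Matrix.mul_assoc, hcan]
  rw [h1, Matrix.trace_mul_comm, Matrix.mul_assoc, Matrix.mul_assoc, hUUt, Matrix.mul_one]

lemma dot_entry {p : ℕ} (U Γ : Matrix (Fin p) (Fin p) ℝ) (i j : Fin p) :
    ((fun k => U k i) ⬝ᵥ Γ.mulVec (fun k => U k j)) = (Uᵀ * Γ * U) i j := by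
  simp only [dotProduct, Matrix.mulVec, Matrix.mul_apply, Matrix.transpose_apply,
    Finset.sum_mul, Finset.mul_sum, dotProduct]
  rw [Finset.sum_comm]
  congr 1; ext m; congr 1; ext k; ring

/-- For an orthogonal `U` with columns `u₁,…,u_p`, symmetric `Ĉ` and
`λ ≥ 0`, the function `Γ ↦ ‖Ĉ − Γ‖_F² + λ·Σ_{i≠j}(uᵢᵀΓuⱼ)²` over symmetric matrices has
unique minimizer `Γ* = (1 − μ)Ĉ + μ·p_Π(Ĉ)` where `p_Π(Ĉ) = U((UᵀĈU) ∘ I)Uᵀ`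
and `μ = λ/(1 + λ)`. -/
theorem pca_denoising_minimizer {p : ℕ}
    (U Chat : Matrix (Fin p) (Fin p) ℝ)
    (hU : Uᵀ * U = 1) (hChat : Chat.IsSymm)
    (l : ℝ) (hl : 0 ≤ l) (μ : ℝ) (hμ : μ = l / (1 + l))
    (P : Matrix (Fin p) (Fin p) ℝ)
    (hP : P = U * (Matrix.hadamard (Uᵀ * Chat * U) (1 : Matrix (Fin p) (Fin p) ℝ)) * Uᵀ)
    (f : Matrix (Fin p) (Fin p) ℝ → ℝ)
    (hf : ∀ Γ, f Γ = frobSq (Chat - Γ)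
        + l * ∑ i : Fin p, ∑ j : Fin p,
            if i ≠ j then ((fun k => U k i) ⬝ᵥ Γ.mulVec (fun k => U k j)) ^ 2 else 0) :
    ((1 - μ) • Chat + μ • P).IsSymm ∧
      ∀ Γ : Matrix (Fin p) (Fin p) ℝ, Γ.IsSymm → Γ ≠ (1 - μ) • Chat + μ • P →
        f ((1 - μ) • Chat + μ • P) < f Γ := by
  have h1l : (0:ℝ) < 1 + l := by linarith
  have hUUt : U * Uᵀ = 1 := mul_eq_one_comm.mp hU
  have hcan : ∀ X : Matrix (Fin p) (Fin p) ℝ, U * (Uᵀ * X) = X := fun X => by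
    rw [← Matrix.mul_assoc, hUUt, Matrix.one_mul]
  have hcan' : ∀ X : Matrix (Fin p) (Fin p) ℝ, Uᵀ * (U * X) = X := fun X => by
    rw [← Matrix.mul_assoc, hU, Matrix.one_mul]
  -- the conjugated data matrix
  have hCsymm : (Uᵀ * Chat * U)ᵀ = Uᵀ * Chat * U := by
    simp only [transpose_mul, transpose_transpose, hChat.eq, Matrix.mul_assoc]
  -- symmetry of the hadamard projection
  have hDsymm : (Matrix.hadamard (Uᵀ * Chat * U) (1 : Matrix (Fin p) (Fin p) ℝ))ᵀ
      = Matrix.hadamard (Uᵀ * Chat * U) (1 : Matrix (Fin p) (Fin p) ℝ) := by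
    ext i j
    have := congrFun (congrFun hCsymm i) j
    simp only [Matrix.transpose_apply, Matrix.hadamard_apply, Matrix.one_apply] at this ⊢
    by_cases h : i = j <;> simp [h, eq_comm, this]
  have hPsymm : Pᵀ = P := by
    rw [hP, transpose_mul, transpose_mul, transpose_transpose, hDsymm, ← Matrix.mul_assoc]
  have hGsymm : ((1 - μ) • Chat + μ • P).IsSymm := by
    unfold Matrix.IsSymm
    rw [transpose_add, transpose_smul, transpose_smul, hChat.eq, hPsymm]
  refine ⟨hGsymm, ?_⟩
  -- the minimizer in conjugated coordinates
  have hUtPU : Uᵀ * P * U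
      = Matrix.hadamard (Uᵀ * Chat * U) (1 : Matrix (Fin p) (Fin p) ℝ) := by
    rw [hP]
    simp only [Matrix.mul_assoc, hcan', hU, Matrix.mul_one]
  have hGsB : Uᵀ * ((1 - μ) • Chat + μ • P) * U
      = (1 - μ) • (Uᵀ * Chat * U)
        + μ • Matrix.hadamard (Uᵀ * Chat * U) (1 : Matrix (Fin p) (Fin p) ℝ) := by
    rw [Matrix.mul_add, Matrix.add_mul, Matrix.mul_smul, Matrix.smul_mul,
      Matrix.mul_smul, Matrix.smul_mul, hUtPU]
  -- entrywise characterization of the minimizer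
  have hBs : ∀ i j : Fin p,
      (1 + (if i = j then 0 else l)) * ((Uᵀ * ((1 - μ) • Chat + μ • P) * U) i j)
        = (Uᵀ * Chat * U) i j := by
    intro i j
    rw [hGsB]
    by_cases h : i = j
    · simp [h, Matrix.hadamard_apply, Matrix.one_apply]
      ring
    · simp only [h, if_false, Matrix.add_apply, Matrix.smul_apply, Matrix.hadamard_apply,
        Matrix.one_apply, smul_eq_mul]
      rw [hμ]
      field_simp
      try ring
  -- the objective in conjugated coordinates
  have hfΓ : ∀ Γ : Matrix (Fin p) (Fin p) ℝ,
      f Γ = ∑ i : Fin p, ∑ j : Fin p,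
        (((Uᵀ * Chat * U) i j - (Uᵀ * Γ * U) i j) ^ 2
          + (if i = j then 0 else l) * ((Uᵀ * Γ * U) i j) ^ 2) := by
    intro Γ
    rw [hf]
    have h1 : frobSq (Chat - Γ)
        = ∑ i : Fin p, ∑ j : Fin p, ((Uᵀ * Chat * U) i j - (Uᵀ * Γ * U) i j) ^ 2 := by
      rw [← frobSq_conj U (Chat - Γ) hUUt, frobSq_eq_sum]
      simp only [Matrix.mul_sub, Matrix.sub_mul, Matrix.sub_apply]
    have h2 : l * ∑ i : Fin p, ∑ j : Fin p,
          (if i ≠ j then ((fun k => U k i) ⬝ᵥ Γ.mulVec (fun k => U k j)) ^ 2 else 0)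
        = ∑ i : Fin p, ∑ j : Fin p,
          (if i = j then 0 else l) * ((Uᵀ * Γ * U) i j) ^ 2 := by
      rw [Finset.mul_sum]
      refine Finset.sum_congr rfl fun i _ => ?_
      rw [Finset.mul_sum]
      refine Finset.sum_congr rfl fun j _ => ?_
      rw [dot_entry]
      by_cases h : i = j <;> simp [h]
    rw [h1, h2, ← Finset.sum_add_distrib]
    exact Finset.sum_congr rfl fun i _ => (Finset.sum_add_distrib).symm
  -- key identity: excess objective is a weighted sum of squares
  have key : ∀ Γ : Matrix (Fin p) (Fin p) ℝ,
      f Γ - f ((1 - μ) • Chat + μ • P)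
        = ∑ i : Fin p, ∑ j : Fin p,
          (1 + (if i = j then 0 else l))
            * ((Uᵀ * Γ * U) i j - (Uᵀ * ((1 - μ) • Chat + μ • P) * U) i j) ^ 2 := by
    intro Γ
    rw [hfΓ Γ, hfΓ ((1 - μ) • Chat + μ • P), ← Finset.sum_sub_distrib]
    refine Finset.sum_congr rfl fun i _ => ?_
    rw [← Finset.sum_sub_distrib]
    refine Finset.sum_congr rfl fun j _ => ?_
    have hc := hBs i j
    by_cases h : i = j <;>
      [simp only [if_pos h] at hc ⊢; simp only [if_neg h] at hc ⊢] <;>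
      linear_combination (2 * ((Uᵀ * Γ * U) i j
        - (Uᵀ * ((1 - μ) • Chat + μ • P) * U) i j)) * hc
  intro Γ _ hne
  have hrec : ∀ X : Matrix (Fin p) (Fin p) ℝ, U * (Uᵀ * X * U) * Uᵀ = X := by
    intro X
    calc U * (Uᵀ * X * U) * Uᵀ = U * (Uᵀ * (X * (U * Uᵀ))) := by
          simp only [Matrix.mul_assoc]
      _ = X := by rw [hUUt, Matrix.mul_one, hcan]
  have hBne : ∃ i j : Fin p,
      (Uᵀ * Γ * U) i j ≠ (Uᵀ * ((1 - μ) • Chat + μ • P) * U) i j := by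
    by_contra h
    push_neg at h
    apply hne
    have hBeq : Uᵀ * Γ * U = Uᵀ * ((1 - μ) • Chat + μ • P) * U := Matrix.ext h
    have := congrArg (fun X => U * X * Uᵀ) hBeq
    simpa only [hrec] using this
  obtain ⟨i₀, j₀, hij⟩ := hBne
  have hterm_nonneg : ∀ i j : Fin p, (0:ℝ) ≤ (1 + (if i = j then 0 else l))
      * ((Uᵀ * Γ * U) i j - (Uᵀ * ((1 - μ) • Chat + μ • P) * U) i j) ^ 2 := by
    intro i j
    apply mul_nonneg _ (sq_nonneg _)
    split_ifs <;> linarith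
  have hpos : 0 < ∑ i : Fin p, ∑ j : Fin p,
      (1 + (if i = j then 0 else l))
        * ((Uᵀ * Γ * U) i j - (Uᵀ * ((1 - μ) • Chat + μ • P) * U) i j) ^ 2 := by
    refine Finset.sum_pos' (fun i _ => Finset.sum_nonneg fun j _ => hterm_nonneg i j)
      ⟨i₀, Finset.mem_univ _, ?_⟩
    refine Finset.sum_pos' (fun j _ => hterm_nonneg i₀ j) ⟨j₀, Finset.mem_univ _, ?_⟩
    have hd : (Uᵀ * Γ * U) i₀ j₀ - (Uᵀ * ((1 - μ) • Chat + μ • P) * U) i₀ j₀ ≠ 0 :=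
      sub_ne_zero.mpr hij
    apply mul_pos
    · split_ifs <;> linarith
    · positivity
  have := key Γ
  linarith
end
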